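/- Let G be a prime planar digraph in which incoming and outgoing edges alternate at each vertex, let w be a vertex of G of in-degree n. Then there exists a vertex v \ne w such that the number of directed spanning subtrees of G with origin v is at least n. -/

import Mathlib

/-- A digraph: a (multi)graph in which multiple edges and loops are allowed,
together with an orientation.  An edge `e` runs from `src e` to `tgt e`. -/
structure MultiDigraph (V E : Type) where
  src : E → V
  tgt : E → V

namespace MultiDigraph

variable {V E : Type}

/-- One step from `a` to `b` along an edge belonging to `T`. -/
def step (G : MultiDigraph V E) (T : Set E) (a b : V) : Prop :=
  ∃ e ∈ T, G.src e = a ∧ G.tgt e = b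

/-- Reachability by a directed path using only edges of `T`. -/
def reach (G : MultiDigraph V E) (T : Set E) : V → V → Prop :=
  Relation.ReflTransGen (G.step T)

/-- `T` is a directed spanning subtree of `G` with origin `u`: no edge of `T`
ends at `u`, every other vertex is the terminal vertex of exactly one edge of
`T`, and every vertex is reachable from `u` through `T` (which forces
connectedness and the absence of cycles). -/
def IsSpanTree (G : MultiDigraph V E) (u : V) (T : Set E) : Prop :=
  (∀ e ∈ T, G.tgt e ≠ u) ∧
  (∀ w, w ≠ u → ∃! e, e ∈ T ∧ G.tgt e = w) ∧
  (∀ w, G.reach T u w)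

/-- The number of directed spanning subtrees of `G` with origin `u`. -/
noncomputable def treeCount (G : MultiDigraph V E) (u : V) : ℕ :=
  Set.ncard {T : Set E | G.IsSpanTree u T}

/-- The digraph `G \ e` obtained by deleting the edge `e`. -/
def delete (G : MultiDigraph V E) (e : E) : MultiDigraph V {f : E // f ≠ e} :=
  ⟨fun f => G.src f.1, fun f => G.tgt f.1⟩

/-- The digraph `G / e` obtained by contracting the edge `e` to a point:
the two endpoints of `e` are identified and `e` is removed. -/
def contract (G : MultiDigraph V E) (e : E) :
    MultiDigraph (Quot fun a b => a = G.src e ∧ b = G.tgt e) {f : E // f ≠ e} :=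
  ⟨fun f => Quot.mk _ (G.src f.1), fun f => Quot.mk _ (G.tgt f.1)⟩

end MultiDigraph

namespace MultiDigraph

variable {V E : Type}

/-- The endpoint of a dart: `(e, false)` sits at the initial vertex of `e`,
and `(e, true)` sits at the terminal vertex of `e`. -/
def dartVert (G : MultiDigraph V E) (d : E × Bool) : V :=
  if d.2 then G.tgt d.1 else G.src d.1

/-- One undirected step using an edge in `S`. -/
def ustep (G : MultiDigraph V E) (S : Set E) (a b : V) : Prop :=
  ∃ e ∈ S, (G.src e = a ∧ G.tgt e = b) ∨ (G.src e = b ∧ G.tgt e = a)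

/-- A (planar) digraph is prime if it has no loops, no cut vertex, and no
simple closed curve in the sphere meets its edges at exactly two points with
vertices on both sides; for a connected plane graph the last condition is
equivalent to saying that removing any (at most) two edges leaves the graph
connected. -/
def Prime (G : MultiDigraph V E) : Prop :=
  (∀ e : E, G.src e ≠ G.tgt e) ∧
  (∀ v a b : V, a ≠ v → b ≠ v →
    Relation.ReflTransGen
      (fun x y => x ≠ v ∧ y ≠ v ∧ G.ustep {e | G.src e ≠ v ∧ G.tgt e ≠ v} x y)
      a b) ∧
  (∀ e₁ e₂ : E, ∀ a b : V,
    Relation.ReflTransGen (G.ustep {e | e ≠ e₁ ∧ e ≠ e₂}) a b)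

end MultiDigraph

/-- A digraph together with a combinatorial planar embedding in the 2-sphere:
a rotation system `rot` (sending each dart to the next dart counterclockwise
around the same vertex), required to satisfy Euler's formula
`V - E + F = 2`, where the faces (regions) are the orbits of the face
permutation `d ↦ rot (d.1, !d.2)`. -/
structure PlanarDigraph (V E : Type) where
  G : MultiDigraph V E
  rot : E × Bool → E × Bool
  rot_vertex : ∀ d, G.dartVert (rot d) = G.dartVert d
  rot_bijective : Function.Bijective rot
  rot_cyclic : ∀ d d', G.dartVert d = G.dartVert d' → ∃ k : ℕ, rot^[k] d = d'
  euler : Nat.card V +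
      Nat.card (Quot fun d d' : E × Bool => d' = rot (d.1, !d.2)) =
    Nat.card E + 2

/-- Incoming and outgoing edges alternate around each vertex of `P`. -/
def PlanarDigraph.Alternating {V E : Type} (P : PlanarDigraph V E) : Prop :=
  ∀ d : E × Bool, (P.rot d).2 = !d.2

/-!
Alternation makes every vertex balanced, so every vertex set has as many edges entering as
leaving it; since deleting two edges never disconnects the graph, every proper cut has at least
two edges in each direction.

Let `v` be the source of an edge into `w`, and `R` the set of vertices reachable from `v` without
visiting `w`; of the `n` edges into `w`, `r` start in `R` and `u` do not. Sort the spanning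
subtrees with origin `v` by the parent edge of `w`. For a parent edge from `R`, the class is
counted by the general bound `#trees ≥ 1 + ∑ y, (ρ y - 1)`, where `ρ y` is the number of possible
parent edges of `y`; at each vertex `x` outside `R ∪ {w}` the cut bound shows that at most
`2 * (ρ x - 1)` edges run from `x` to `w`, so the class has at least `1 + u / 2` trees. The cut
bound at `R` gives `r ≥ 2` when `u > 0`, hence `r * (1 + u / 2) ≥ r + u = n`.
-/

theorem Set.ncard_setOf_eq_sum_fiberwise {α β : Type*} [Finite α] {p : α → Prop} {g : α → β}
    {t : Finset β} (h : ∀ a, p a → g a ∈ t) :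
    {a | p a}.ncard = ∑ b ∈ t, {a | p a ∧ g a = b}.ncard := by
  rw [← finsum_mem_coe_finset, ← t.finite_toSet.ncard_biUnion (fun _ _ => Set.toFinite _)
    fun b _ c _ hbc => Set.disjoint_left.2 fun a hb hc => hbc (hb.2.symm.trans hc.2)]
  congr 1
  ext a
  simp only [Set.mem_iUnion, Finset.mem_coe, exists_prop]
  exact ⟨fun ha => ⟨g a, h a ha, ha, rfl⟩, fun ⟨_, _, ha, _⟩ => ha⟩

namespace MultiDigraph

variable {V E : Type} (G : MultiDigraph V E)

/-- Reachability through edges of `S` by a path that never enters `A`; the start may lie in `A`. -/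
def ReachAvoiding (S : Set E) (A : Set V) : V → V → Prop :=
  Relation.ReflTransGen fun a b => b ∉ A ∧ G.step S a b

/-- When every vertex is reachable from `u` through `S` and `y ≠ u`, these are the edges that
are the parent edge of `y` in some spanning subtree with origin `u` and edges in `S`. -/
def parentCandidates (S : Set E) (u y : V) : Set E :=
  {f | f ∈ S ∧ G.tgt f = y ∧ G.ReachAvoiding S {y} u (G.src f)}

def spanTreesIn (S : Set E) (u : V) : Set (Set E) :=
  {T | G.IsSpanTree u T ∧ T ⊆ S}

def fixParent (S : Set E) (f : E) : Set E :=
  S \ ({e | G.tgt e = G.tgt f} \ {f})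

def outEdges (B : Set V) : Set E := {e | G.src e ∈ B ∧ G.tgt e ∉ B}

def inEdges (B : Set V) : Set E := {e | G.tgt e ∈ B ∧ G.src e ∉ B}

def IsBalanced : Prop := ∀ x, {e | G.tgt e = x}.ncard = {e | G.src e = x}.ncard

def IsThreeEdgeConnected : Prop :=
  ∀ e₁ e₂ : E, ∀ a b : V, Relation.ReflTransGen (G.ustep {e | e ≠ e₁ ∧ e ≠ e₂}) a b

variable {G}

theorem reach_iff_reachAvoiding_empty {S : Set E} {a b : V} :
    G.reach S a b ↔ G.ReachAvoiding S ∅ a b :=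
  ⟨fun h => Relation.ReflTransGen.mono (fun _ _ hst => ⟨Set.notMem_empty _, hst⟩) _ _ h,
    fun h => Relation.ReflTransGen.mono (fun _ _ hst => hst.2) _ _ h⟩

theorem reach_mono {S S' : Set E} (hS : S ⊆ S') {a b : V} (h : G.reach S a b) :
    G.reach S' a b :=
  Relation.ReflTransGen.mono (fun _ _ ⟨e, he, hst⟩ => ⟨e, hS he, hst⟩) _ _ h

theorem exists_crossing_of_reach {S : Set E} {W : Set V} {a b : V} (h : G.reach S a b)
    (ha : a ∈ W) (hb : b ∉ W) : ∃ e ∈ S, G.src e ∈ W ∧ G.tgt e ∉ W := by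
  induction h with
  | refl => exact absurd ha hb
  | @tail c d _ hcd ih =>
    obtain ⟨e, he, hsrc, htgt⟩ := hcd
    by_cases hc : c ∈ W
    · exact ⟨e, he, hsrc ▸ hc, htgt ▸ hb⟩
    · exact ih hc

namespace ReachAvoiding

variable {S S' : Set E} {A A' : Set V} {a b : V}

theorem mono_avoid (hA : A' ⊆ A) (h : G.ReachAvoiding S A a b) : G.ReachAvoiding S A' a b :=
  Relation.ReflTransGen.mono (fun _ _ hst => ⟨fun hc => hst.1 (hA hc), hst.2⟩) _ _ h

theorem mono_of_tgt_notMem (hS : ∀ e ∈ S, G.tgt e ∉ A → e ∈ S')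
    (h : G.ReachAvoiding S A a b) : G.ReachAvoiding S' A a b := by
  refine Relation.ReflTransGen.mono (fun c d ⟨hd, e, he, hsrc, htgt⟩ => ?_) _ _ h
  exact ⟨hd, e, hS e he (htgt ▸ hd), hsrc, htgt⟩

theorem mono (hS : S ⊆ S') (h : G.ReachAvoiding S A a b) : G.ReachAvoiding S' A a b :=
  mono_of_tgt_notMem (fun _ he _ => hS he) h

theorem eq_of_mem (h : G.ReachAvoiding S A a b) (hb : b ∈ A) : b = a := by
  rcases h.cases_tail with h | ⟨c, -, hcb, -⟩
  · exact h
  · exact absurd hb hcb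

theorem insert_of_not_reachAvoiding {t : V} (ht : ¬ G.ReachAvoiding S A a t)
    (h : G.ReachAvoiding S A a b) : G.ReachAvoiding S (insert t A) a b := by
  induction h with
  | refl => exact .refl
  | @tail c d hac hcd ih =>
    refine ih.tail ⟨fun hd => ?_, hcd.2⟩
    rcases hd with rfl | hd
    · exact ht (hac.tail hcd)
    · exact hcd.1 hd

theorem exists_last_edge {y : V} (h : G.ReachAvoiding S A a y) (hy : y ≠ a) :
    ∃ e ∈ S, G.tgt e = y ∧ G.ReachAvoiding S (insert y A) a (G.src e) := by
  suffices ∀ z, G.ReachAvoiding S A a z → G.ReachAvoiding S (insert y A) a z ∨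
      ∃ e ∈ S, G.tgt e = y ∧ G.ReachAvoiding S (insert y A) a (G.src e) from
    (this y h).resolve_left fun h' => hy (h'.eq_of_mem (Set.mem_insert y A))
  intro z hz
  induction hz with
  | refl => exact Or.inl .refl
  | @tail c d _ hcd ih =>
    obtain ⟨hd, e, he, rfl, rfl⟩ := hcd
    rcases ih with hc | hlast
    · by_cases hdy : G.tgt e = y
      · exact Or.inr ⟨e, he, hdy, hc⟩
      · exact Or.inl (hc.tail ⟨fun hd' => hd'.elim hdy hd, e, he, rfl, rfl⟩)
    · exact Or.inr hlast

/-- If deleting `g` cuts `s` off, the path to `s` runs through `g`, and its part before `g`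
reaches the source of `g` without using `g` or visiting its target. -/
theorem src_of_not_reachAvoiding_sdiff {s : V} {g : E} (h : G.ReachAvoiding S A a s)
    (hg : ¬ G.ReachAvoiding (S \ {g}) A a s) :
    G.ReachAvoiding (S \ {g}) (insert (G.tgt g) A) a (G.src g) := by
  have key : ∀ z, G.ReachAvoiding S A a z → G.ReachAvoiding (S \ {g}) A a z ∨
      (G.ReachAvoiding (S \ {g}) A a (G.src g) ∧ G.ReachAvoiding (S \ {g}) A (G.tgt g) z) := by
    intro z hz
    induction hz with
    | refl => exact Or.inl .refl
    | @tail c d _ hcd ih =>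
      obtain ⟨hd, e, he, rfl, rfl⟩ := hcd
      by_cases heg : e = g
      · subst heg
        exact Or.inr ⟨ih.elim id And.left, .refl⟩
      · have hst : G.tgt e ∉ A ∧ G.step (S \ {g}) (G.src e) (G.tgt e) :=
          ⟨hd, e, ⟨he, heg⟩, rfl, rfl⟩
        exact ih.imp (·.tail hst) fun h => ⟨h.1, h.2.tail hst⟩
  obtain ⟨hsrc, htgt⟩ := (key s h).resolve_left hg
  exact insert_of_not_reachAvoiding (fun h' => hg (h'.trans htgt)) hsrc

end ReachAvoiding

section ParentCandidates

variable {S : Set E} {u : V}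

/-- Read `¬ G.ReachAvoiding (S \ {f}) {G.tgt g} u (G.src g)` as "deleting `f` destroys `g` as a
parent candidate"; this relation is transitive. -/
theorem not_reachAvoiding_sdiff_trans {f g h : E}
    (hfg : ¬ G.ReachAvoiding (S \ {f}) {G.tgt g} u (G.src g))
    (hgh : ¬ G.ReachAvoiding (S \ {g}) {G.tgt h} u (G.src h)) :
    ¬ G.ReachAvoiding (S \ {f}) {G.tgt h} u (G.src h) := fun hfh =>
  hfg <| (hfh.src_of_not_reachAvoiding_sdiff fun hc => hgh (hc.mono
    (Set.sdiff_subset_sdiff_left Set.sdiff_subset))).mono Set.sdiff_subset |>.mono_avoid (by simp)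

theorem exists_forall_reachAvoiding_sdiff [Finite E] {F : Set E} (hF : F.Nonempty)
    (hcand : ∀ f ∈ F, G.ReachAvoiding S {G.tgt f} u (G.src f)) :
    ∃ f ∈ F, ∀ g ∈ F, G.ReachAvoiding (S \ {f}) {G.tgt g} u (G.src g) := by
  let destroyedBy : E → E → Prop := fun g f =>
    f ∈ F ∧ g ∈ F ∧ ¬ G.ReachAvoiding (S \ {f}) {G.tgt g} u (G.src g)
  have : IsTrans E destroyedBy :=
    ⟨fun _ _ _ ⟨_, hh, hgh⟩ ⟨hf, _, hfg⟩ => ⟨hf, hh, not_reachAvoiding_sdiff_trans hfg hgh⟩⟩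
  have : Std.Irrefl destroyedBy := ⟨fun f ⟨hf, _, hff⟩ => hff <|
    (hcand f hf).mono_of_tgt_notMem fun e he hef => ⟨he, fun hc => hef (hc ▸ rfl)⟩⟩
  obtain ⟨f, hf, hmin⟩ := (Finite.wellFounded_of_trans_of_irrefl destroyedBy).has_min F hF
  exact ⟨f, hf, fun g hg => by_contra fun hfg => hmin g hg ⟨hf, hg, hfg⟩⟩

theorem ncard_parentCandidates_le_sdiff_add_one [Finite E] {f : E} :
    (G.parentCandidates S u (G.tgt f)).ncard ≤
      (G.parentCandidates (S \ {f}) u (G.tgt f)).ncard + 1 := by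
  have hsub : G.parentCandidates S u (G.tgt f) \ {f} ⊆
      G.parentCandidates (S \ {f}) u (G.tgt f) :=
    fun e ⟨⟨he, het, hesrc⟩, hef⟩ => ⟨⟨he, hef⟩, het,
      hesrc.mono_of_tgt_notMem fun e' he' het' => ⟨he', fun hc => het' (hc ▸ rfl)⟩⟩
  have h₁ := Set.ncard_le_ncard hsub
  have h₂ := Set.ncard_le_ncard_sdiff_add_ncard (G.parentCandidates S u (G.tgt f)) {f}
  rw [Set.ncard_singleton] at h₂
  omega

end ParentCandidates

section SpanningTrees

variable {S : Set E} {u : V} {f : E} {T : Set E}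

theorem IsSpanTree.eq_of_tgt_eq (hT : G.IsSpanTree u T) {e : E} (he : e ∈ T) (hf : f ∈ T)
    (h : G.tgt e = G.tgt f) : e = f := by
  obtain ⟨p, -, huniq⟩ := hT.2.1 (G.tgt f) (hT.1 f hf)
  exact (huniq e ⟨he, h⟩).trans (huniq f ⟨hf, rfl⟩).symm

theorem IsSpanTree.mem_parentCandidates (hT : G.IsSpanTree u T) (hTS : T ⊆ S) (hf : f ∈ T) :
    f ∈ G.parentCandidates S u (G.tgt f) := by
  obtain ⟨e, he, hetgt, hesrc⟩ :=
    (reach_iff_reachAvoiding_empty.1 (hT.2.2 (G.tgt f))).exists_last_edge (hT.1 f hf)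
  obtain rfl := hT.eq_of_tgt_eq he hf hetgt
  exact ⟨hTS he, rfl, (hesrc.mono hTS).mono_avoid (by simp)⟩

theorem spanTreesIn_nonempty [Finite E] (hS : ∀ y, G.reach S u y) :
    (G.spanTreesIn S u).Nonempty := by
  -- a largest arborescence with origin `u` and edges in `S` spans all vertices
  let IsPartial : Set E → Prop := fun T => T ⊆ S ∧ (∀ e ∈ T, G.tgt e ≠ u) ∧
    Set.InjOn G.tgt T ∧ ∀ e ∈ T, G.reach T u (G.src e)
  obtain ⟨T, ⟨hTS, hTu, hinj, hreach⟩, hmax⟩ := Set.exists_max_image {T | IsPartial T}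
    Set.ncard (Set.toFinite _) ⟨∅, by simp [IsPartial]⟩
  let W : Set V := {y | y = u ∨ ∃ e ∈ T, G.tgt e = y}
  have hW : ∀ y ∈ W, G.reach T u y := by
    rintro y (rfl | ⟨e, he, rfl⟩)
    · exact .refl
    · exact (hreach e he).tail ⟨e, he, rfl, rfl⟩
  by_cases hall : ∀ y, y ∈ W
  · refine ⟨T, ⟨hTu, fun y hy => ?_, fun y => hW y (hall y)⟩, hTS⟩
    obtain rfl | ⟨e, he, rfl⟩ := hall y
    · exact absurd rfl hy
    · exact ⟨e, ⟨he, rfl⟩, fun e' he' => hinj he'.1 he he'.2⟩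
  push Not at hall
  obtain ⟨y, hy⟩ := hall
  obtain ⟨e, heS, hsrc, htgt⟩ := exists_crossing_of_reach (hS y) (Or.inl rfl : u ∈ W) hy
  have heT : e ∉ T := fun he => htgt (Or.inr ⟨e, he, rfl⟩)
  have hext : IsPartial (insert e T) := by
    refine ⟨Set.insert_subset heS hTS, ?_, (Set.injOn_insert heT).2 ⟨hinj, ?_⟩, ?_⟩
    · rintro e' (rfl | he')
      · exact fun hc => htgt (Or.inl hc)
      · exact hTu e' he'
    · rintro ⟨e', he', hee'⟩
      exact htgt (Or.inr ⟨e', he', hee'⟩)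
    · rintro e' (rfl | he')
      · exact reach_mono (Set.subset_insert _ _) (hW _ hsrc)
      · exact reach_mono (Set.subset_insert _ _) (hreach e' he')
  have := hmax _ hext
  rw [Set.ncard_insert_of_notMem heT] at this
  omega

theorem reach_fixParent (hS : ∀ y, G.reach S u y) (hf : f ∈ G.parentCandidates S u (G.tgt f))
    (y : V) : G.reach (G.fixParent S f) u y := by
  have hfS : f ∈ G.fixParent S f := ⟨hf.1, fun hc => hc.2 rfl⟩
  have hsrc : G.reach (G.fixParent S f) u (G.src f) := reach_iff_reachAvoiding_empty.2 <|
    (hf.2.2.mono_of_tgt_notMem (S' := G.fixParent S f) fun e he het =>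
      ⟨he, fun hc => het hc.1⟩).mono_avoid (by simp)
  have htgt : G.reach (G.fixParent S f) u (G.tgt f) := hsrc.tail ⟨f, hfS, rfl, rfl⟩
  induction hS y with
  | refl => exact .refl
  | @tail c d _ hcd ih =>
    obtain ⟨e, he, hsrc, rfl⟩ := hcd
    by_cases het : G.tgt e = G.tgt f
    · exact het ▸ htgt
    · exact ih.tail ⟨e, ⟨he, fun hc => het hc.1⟩, hsrc, rfl⟩

theorem mem_spanTreesIn_sdiff_singleton :
    T ∈ G.spanTreesIn (S \ {f}) u ↔ T ∈ G.spanTreesIn S u ∧ f ∉ T := by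
  simp [spanTreesIn, Set.subset_sdiff, and_assoc]

theorem mem_spanTreesIn_fixParent (hf : G.tgt f ≠ u) :
    T ∈ G.spanTreesIn (G.fixParent S f) u ↔ T ∈ G.spanTreesIn S u ∧ f ∈ T := by
  constructor
  · rintro ⟨hT, hTS⟩
    obtain ⟨p, ⟨hpT, hp⟩, -⟩ := hT.2.1 (G.tgt f) hf
    obtain rfl : p = f := by_contra fun hc => (hTS hpT).2 ⟨hp, hc⟩
    exact ⟨⟨hT, hTS.trans Set.sdiff_subset⟩, hpT⟩
  · rintro ⟨⟨hT, hTS⟩, hfT⟩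
    exact ⟨hT, fun e he => ⟨hTS he, fun ⟨hef, hne⟩ => hne (hT.eq_of_tgt_eq he hfT hef)⟩⟩

theorem ncard_spanTreesIn_eq_add [Finite E] (hf : G.tgt f ≠ u) :
    (G.spanTreesIn S u).ncard =
      (G.spanTreesIn (S \ {f}) u).ncard + (G.spanTreesIn (G.fixParent S f) u).ncard := by
  have hunion : G.spanTreesIn S u =
      G.spanTreesIn (S \ {f}) u ∪ G.spanTreesIn (G.fixParent S f) u := by
    ext T
    simp only [Set.mem_union, mem_spanTreesIn_sdiff_singleton, mem_spanTreesIn_fixParent hf]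
    tauto
  rw [hunion, Set.ncard_union_eq]
  exact Set.disjoint_left.2 fun T h₁ h₂ =>
    (mem_spanTreesIn_sdiff_singleton.1 h₁).2 ((mem_spanTreesIn_fixParent hf).1 h₂).2

theorem sum_ncard_spanTreesIn_fixParent_le [Finite E] {y : V} (hy : y ≠ u) (s : Finset E)
    (hs : ∀ f ∈ s, G.tgt f = y) :
    ∑ f ∈ s, (G.spanTreesIn (G.fixParent S f) u).ncard ≤ (G.spanTreesIn S u).ncard := by
  have hdisj : (s : Set E).PairwiseDisjoint fun f => G.spanTreesIn (G.fixParent S f) u := by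
    intro f hf g hg hfg
    refine Set.disjoint_left.2 fun T hTf hTg => hfg ?_
    obtain ⟨hT, hfT⟩ := (mem_spanTreesIn_fixParent (hs f hf ▸ hy)).1 hTf
    obtain ⟨-, hgT⟩ := (mem_spanTreesIn_fixParent (hs g hg ▸ hy)).1 hTg
    exact hT.1.eq_of_tgt_eq hfT hgT ((hs f hf).trans (hs g hg).symm)
  rw [← finsum_mem_coe_finset, ← s.finite_toSet.ncard_biUnion (fun _ _ => Set.toFinite _) hdisj]
  refine Set.ncard_le_ncard (Set.iUnion₂_subset fun f hf T hT => ?_)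
  exact ((mem_spanTreesIn_fixParent (hs f hf ▸ hy)).1 hT).1

/-- Induction on `S`. Fix a spanning subtree `T₀`. If some parent candidate `f` lies outside `T₀`,
choose one whose deletion destroyedBy no other such candidate; the trees avoiding `f` are counted by
induction, and those using `f` add at least one more. -/
theorem one_add_sum_le_ncard_spanTreesIn [Fintype V] [DecidableEq V] [Finite E]
    (hS : ∀ y, G.reach S u y) :
    1 + ∑ y ∈ Finset.univ.erase u, ((G.parentCandidates S u y).ncard - 1) ≤
      (G.spanTreesIn S u).ncard := by
  induction hn : S.ncard using Nat.strong_induction_on generalizing S with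
  | _ n ih =>
  obtain ⟨T₀, hT₀, hT₀S⟩ := G.spanTreesIn_nonempty hS
  let F : Set E := {f | G.tgt f ≠ u ∧ f ∈ G.parentCandidates S u (G.tgt f) ∧ f ∉ T₀}
  rcases F.eq_empty_or_nonempty with hF | hF
  · have htree : 1 ≤ (G.spanTreesIn S u).ncard := (Set.ncard_pos (Set.toFinite _)).2 ⟨T₀, hT₀, hT₀S⟩
    suffices ∀ y ∈ Finset.univ.erase u, (G.parentCandidates S u y).ncard ≤ 1 by
      rw [Finset.sum_eq_zero fun y hy => Nat.sub_eq_zero_of_le (this y hy)]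
      omega
    intro y hy
    have hmem : ∀ g ∈ G.parentCandidates S u y, g ∈ T₀ := fun g hg => by_contra fun hgT₀ =>
      Set.eq_empty_iff_forall_notMem.1 hF g
        ⟨hg.2.1 ▸ Finset.ne_of_mem_erase hy, hg.2.1 ▸ hg, hgT₀⟩
    exact (Set.ncard_le_one (Set.toFinite _)).2 fun g hg g' hg' =>
      hT₀.eq_of_tgt_eq (hmem g hg) (hmem g' hg') (hg.2.1.trans hg'.2.1.symm)
  obtain ⟨f, ⟨hfu, hfcand, hfT₀⟩, hdestroy⟩ :=
    exists_forall_reachAvoiding_sdiff hF fun f hf => hf.2.1.2.2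
  have hT₀f : T₀ ⊆ S \ {f} := fun e he => ⟨hT₀S he, fun hef => hfT₀ (hef ▸ he)⟩
  have hdel := ih _ (hn ▸ Set.ncard_sdiff_singleton_lt_of_mem hfcand.1)
    (fun y => reach_mono hT₀f (hT₀.2.2 y)) rfl
  have hfix : 1 ≤ (G.spanTreesIn (G.fixParent S f) u).ncard :=
    (Set.ncard_pos (Set.toFinite _)).2 (spanTreesIn_nonempty (reach_fixParent hS hfcand))
  have hle : ∀ y ∈ Finset.univ.erase u, (G.parentCandidates S u y).ncard - 1 ≤
      ((G.parentCandidates (S \ {f}) u y).ncard - 1) + if y = G.tgt f then 1 else 0 := by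
    intro y hy
    split_ifs with hyf
    · have := ncard_parentCandidates_le_sdiff_add_one (G := G) (S := S) (u := u) (f := f)
      subst hyf
      omega
    · suffices G.parentCandidates S u y ⊆ G.parentCandidates (S \ {f}) u y by
        have := Set.ncard_le_ncard this
        omega
      rintro g ⟨hg, rfl, hgsrc⟩
      refine ⟨⟨hg, fun hgf => hyf (congrArg G.tgt hgf)⟩, rfl, ?_⟩
      by_cases hgT₀ : g ∈ T₀
      · exact (hT₀.mem_parentCandidates hT₀f hgT₀).2.2
      · exact hdestroy g ⟨Finset.ne_of_mem_erase hy, ⟨hg, rfl, hgsrc⟩, hgT₀⟩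
  have hsum := Finset.sum_le_sum hle
  rw [Finset.sum_add_distrib, Finset.sum_ite_eq',
    if_pos (Finset.mem_erase.2 ⟨hfu, Finset.mem_univ _⟩)] at hsum
  rw [ncard_spanTreesIn_eq_add hfu]
  omega

end SpanningTrees

section Cuts

variable [Finite V] [Finite E]

theorem IsBalanced.ncard_setOf_tgt_mem (hbal : G.IsBalanced) (B : Set V) :
    {e | G.tgt e ∈ B}.ncard = {e | G.src e ∈ B}.ncard := by
  have hB := Set.toFinite B
  rw [Set.ncard_setOf_eq_sum_fiberwise (g := G.tgt) fun e he => hB.mem_toFinset.2 he,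
    Set.ncard_setOf_eq_sum_fiberwise (g := G.src) fun e he => hB.mem_toFinset.2 he]
  refine Finset.sum_congr rfl fun x hx => ?_
  convert hbal x using 2 <;>
    exact Set.ext fun e => ⟨And.right, fun he => ⟨he ▸ hB.mem_toFinset.1 hx, he⟩⟩

theorem IsBalanced.ncard_inEdges_eq (hbal : G.IsBalanced) (B : Set V) :
    (G.inEdges B).ncard = (G.outEdges B).ncard := by
  have hin := Set.ncard_inter_add_ncard_sdiff_eq_ncard {e | G.tgt e ∈ B} {e | G.src e ∈ B}
  have hout := Set.ncard_inter_add_ncard_sdiff_eq_ncard {e | G.src e ∈ B} {e | G.tgt e ∈ B}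
  rw [Set.inter_comm] at hout
  change _ + (G.inEdges B).ncard = _ at hin
  change _ + (G.outEdges B).ncard = _ at hout
  have := hbal.ncard_setOf_tgt_mem B
  omega

namespace IsThreeEdgeConnected

variable [Nonempty E] (hconn : G.IsThreeEdgeConnected) (hbal : G.IsBalanced)
include hconn hbal

/-- A cut with at most one edge in each direction would be disconnected by deleting two edges. -/
theorem two_le_ncard_outEdges {B : Set V} {a b : V} (ha : a ∈ B) (hb : b ∉ B) :
    2 ≤ (G.outEdges B).ncard := by
  by_contra! hlt
  obtain ⟨e₁, he₁⟩ := (Set.ncard_le_one_iff_subset_singleton (Set.toFinite _)).1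
    (show (G.outEdges B).ncard ≤ 1 by omega)
  obtain ⟨e₂, he₂⟩ := (Set.ncard_le_one_iff_subset_singleton (Set.toFinite _)).1
    (show (G.inEdges B).ncard ≤ 1 by rw [hbal.ncard_inEdges_eq]; omega)
  have hstay : ∀ c, Relation.ReflTransGen (G.ustep {e | e ≠ e₁ ∧ e ≠ e₂}) a c → c ∈ B := by
    intro c hc
    induction hc with
    | refl => exact ha
    | @tail c d _ hcd ih =>
      obtain ⟨e, ⟨hne₁, hne₂⟩, ⟨rfl, rfl⟩ | ⟨rfl, rfl⟩⟩ := hcd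
      · exact by_contra fun hd => hne₁ (he₁ ⟨ih, hd⟩)
      · exact by_contra fun hd => hne₂ (he₂ ⟨ih, hd⟩)
  exact hb (hstay b (hconn e₁ e₂ a b))

theorem reach_univ (a b : V) : G.reach Set.univ a b := by
  by_contra hb
  have hout : G.outEdges {z | G.reach Set.univ a z} = ∅ :=
    Set.eq_empty_of_forall_notMem fun e ⟨he, hnot⟩ => hnot (he.tail ⟨e, trivial, rfl, rfl⟩)
  have := hconn.two_le_ncard_outEdges hbal (B := {z | G.reach Set.univ a z}) .refl hb
  rw [hout, Set.ncard_empty] at this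
  omega

variable {v w : V}

/-- The vertices reachable from `v` avoiding `w` can only be left towards `w`. -/
theorem two_le_ncard_tgt_eq_reachAvoiding {x : V} (hvw : v ≠ w)
    (hx : ¬ G.ReachAvoiding Set.univ {w} v x) :
    2 ≤ {e | G.tgt e = w ∧ G.ReachAvoiding Set.univ {w} v (G.src e)}.ncard := by
  have hout : {e | G.tgt e = w ∧ G.ReachAvoiding Set.univ {w} v (G.src e)} =
      G.outEdges {z | G.ReachAvoiding Set.univ {w} v z} := by
    ext e
    refine ⟨fun ⟨ht, hs⟩ => ⟨hs, fun hw => hvw (ht ▸ hw.eq_of_mem ht).symm⟩, fun ⟨hs, ht⟩ => ?_⟩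
    exact ⟨by_contra fun htw => ht (hs.tail ⟨htw, e, trivial, rfl, rfl⟩), hs⟩
  rw [hout]
  exact hconn.two_le_ncard_outEdges hbal .refl hx

/-- Let `B` be the set of vertices reachable from `v` avoiding `x` once `e₀` is the only edge
into `w`. Every edge leaving `B` ends at `x`, so these are the parent candidates of `x`, and
every edge from `x` to `w` enters `B`. -/
theorem ncard_src_eq_tgt_eq_le {x : V} {e₀ : E} (he₀ : G.tgt e₀ = w)
    (hsrc : G.ReachAvoiding Set.univ {w} v (G.src e₀)) (hx : ¬ G.ReachAvoiding Set.univ {w} v x)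
    (hxw : x ≠ w) :
    {e | G.src e = x ∧ G.tgt e = w}.ncard ≤
      2 * ((G.parentCandidates (G.fixParent Set.univ e₀) v x).ncard - 1) := by
  set S := G.fixParent Set.univ e₀
  set B := {z | G.ReachAvoiding S {x} v z}
  have hxB : x ∉ B := fun h => hx (h.eq_of_mem rfl ▸ .refl)
  have hwB : w ∈ B := by
    have : G.ReachAvoiding S {x} v (G.src e₀) :=
      ((ReachAvoiding.insert_of_not_reachAvoiding hx hsrc).mono_of_tgt_notMem (S' := S)
        fun e _ he => ⟨trivial, fun hc => he (Set.mem_insert_of_mem _ (hc.1.trans he₀))⟩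
        ).mono_avoid (by simp)
    exact he₀ ▸ this.tail ⟨he₀ ▸ hxw.symm, e₀, ⟨trivial, fun hc => hc.2 rfl⟩, rfl, rfl⟩
  have hcand : G.parentCandidates S v x = G.outEdges B := by
    ext e
    refine ⟨fun ⟨_, htx, hs⟩ => ⟨hs, htx ▸ hxB⟩, fun ⟨hs, ht⟩ => ?_⟩
    have heS : e ∈ S := ⟨trivial, fun hc => ht (hc.1.trans he₀ ▸ hwB)⟩
    exact ⟨heS, by_contra fun htx => ht (hs.tail ⟨htx, e, heS, rfl, rfl⟩), hs⟩
  have hin : {e | G.src e = x ∧ G.tgt e = w} ⊆ G.inEdges B :=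
    fun e ⟨hs, ht⟩ => ⟨ht ▸ hwB, hs ▸ hxB⟩
  have h₁ := Set.ncard_le_ncard hin
  have h₂ := hbal.ncard_inEdges_eq B
  have h₃ := hconn.two_le_ncard_outEdges hbal (B := B) .refl hxB
  rw [hcand]
  omega

end IsThreeEdgeConnected

end Cuts

theorem treeCount_eq_ncard_spanTreesIn_univ (u : V) :
    G.treeCount u = (G.spanTreesIn Set.univ u).ncard := by
  simp [treeCount, spanTreesIn]

namespace IsThreeEdgeConnected

variable [Fintype V] [Finite E] (hconn : G.IsThreeEdgeConnected) (hbal : G.IsBalanced)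
  (hloop : ∀ e, G.src e ≠ G.tgt e)
include hconn hbal hloop

theorem two_add_ncard_le_two_mul_ncard_spanTreesIn {v w : V} {e₀ : E} (he₀ : G.tgt e₀ = w)
    (hsrc : G.ReachAvoiding Set.univ {w} v (G.src e₀)) :
    2 + {e | G.tgt e = w ∧ ¬ G.ReachAvoiding Set.univ {w} v (G.src e)}.ncard ≤
      2 * (G.spanTreesIn (G.fixParent Set.univ e₀) v).ncard := by
  classical
  have : Nonempty E := ⟨e₀⟩
  have htrees := one_add_sum_le_ncard_spanTreesIn <| reach_fixParent (hconn.reach_univ hbal v)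
    (show e₀ ∈ G.parentCandidates Set.univ v (G.tgt e₀) from ⟨trivial, rfl, he₀ ▸ hsrc⟩)
  suffices {e | G.tgt e = w ∧ ¬ G.ReachAvoiding Set.univ {w} v (G.src e)}.ncard ≤
      2 * ∑ y ∈ Finset.univ.erase v,
        ((G.parentCandidates (G.fixParent Set.univ e₀) v y).ncard - 1) by omega
  rw [Set.ncard_setOf_eq_sum_fiberwise (g := G.src) (t := Finset.univ.erase v)
    fun e ⟨_, hs⟩ => Finset.mem_erase.2 ⟨fun h => hs (h ▸ .refl), Finset.mem_univ _⟩,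
    Finset.mul_sum]
  refine Finset.sum_le_sum fun x _ => ?_
  by_cases hx : ¬ G.ReachAvoiding Set.univ {w} v x ∧ x ≠ w
  · have hsub : {e | (G.tgt e = w ∧ ¬ G.ReachAvoiding Set.univ {w} v (G.src e)) ∧
        G.src e = x} ⊆ {e | G.src e = x ∧ G.tgt e = w} := fun e ⟨⟨ht, _⟩, hs⟩ => ⟨hs, ht⟩
    exact (Set.ncard_le_ncard hsub).trans (hconn.ncard_src_eq_tgt_eq_le hbal he₀ hsrc hx.1 hx.2)
  · have hempty : {e | (G.tgt e = w ∧ ¬ G.ReachAvoiding Set.univ {w} v (G.src e)) ∧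
        G.src e = x} = ∅ :=
      Set.eq_empty_of_forall_notMem fun e ⟨⟨ht, hs⟩, hex⟩ =>
        hx ⟨hex ▸ hs, fun hxw => hloop e (hex.trans (hxw.trans ht.symm))⟩
    simp [hempty]

theorem ncard_tgt_eq_le_treeCount_src (e₁ : E) :
    {e | G.tgt e = G.tgt e₁}.ncard ≤ G.treeCount (G.src e₁) := by
  classical
  have : Fintype E := Fintype.ofFinite E
  have : Nonempty E := ⟨e₁⟩
  set v := G.src e₁
  set w := G.tgt e₁
  set R := G.ReachAvoiding Set.univ {w} v
  set r := {e | G.tgt e = w ∧ R (G.src e)}.ncard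
  set u := {e | G.tgt e = w ∧ ¬ R (G.src e)}.ncard
  have hn : {e | G.tgt e = w}.ncard = r + u :=
    (Set.ncard_inter_add_ncard_sdiff_eq_ncard {e | G.tgt e = w} {e | R (G.src e)}).symm
  let parents : Finset E := Finset.univ.filter fun e => G.tgt e = w ∧ R (G.src e)
  have hr : r = parents.card := by
    simp only [r, parents]
    rw [Set.ncard_eq_toFinset_card', Set.toFinset_ofPred]
  have hclasses : r * (2 + u) ≤ 2 * G.treeCount v := calc
    r * (2 + u) = ∑ _ ∈ parents, (2 + u) := by rw [Finset.sum_const, smul_eq_mul, hr]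
    _ ≤ ∑ e ∈ parents, 2 * (G.spanTreesIn (G.fixParent Set.univ e) v).ncard :=
      Finset.sum_le_sum fun e he => hconn.two_add_ncard_le_two_mul_ncard_spanTreesIn hbal hloop
        (Finset.mem_filter.1 he).2.1 (Finset.mem_filter.1 he).2.2
    _ ≤ 2 * G.treeCount v := by
      rw [← Finset.mul_sum, treeCount_eq_ncard_spanTreesIn_univ]
      exact Nat.mul_le_mul_left 2 <| sum_ncard_spanTreesIn_fixParent_le (hloop e₁).symm parents
        fun e he => (Finset.mem_filter.1 he).2.1
  have hr₂ : u ≠ 0 → 2 ≤ r := fun hu => by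
    obtain ⟨e, -, hs⟩ := Set.nonempty_of_ncard_ne_zero hu
    exact hconn.two_le_ncard_tgt_eq_reachAvoiding hbal (hloop e₁) hs
  rw [hn]
  rcases Nat.eq_zero_or_pos u with hu | hu
  · rw [hu] at hclasses ⊢
    omega
  · nlinarith [hr₂ hu.ne']

end IsThreeEdgeConnected

end MultiDigraph

namespace PlanarDigraph

variable {V E : Type} {P : PlanarDigraph V E}

theorem Alternating.isBalanced (halt : P.Alternating) : P.G.IsBalanced := by
  have hrot : ∀ e, P.rot (e, true) = ((P.rot (e, true)).1, false) :=
    fun e => Prod.ext rfl (by simpa using halt (e, true))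
  have hsrc : ∀ e, P.G.src (P.rot (e, true)).1 = P.G.tgt e := fun e => by
    have h := P.rot_vertex (e, true)
    rw [hrot e] at h
    simpa [MultiDigraph.dartVert] using h
  intro x
  refine Set.ncard_congr (fun e _ => (P.rot (e, true)).1) (fun e he => (hsrc e).trans he)
    (fun a b _ _ hab => ?_) (fun f hf => ?_)
  · exact congrArg Prod.fst (P.rot_bijective.1 ((hrot a).trans (hab ▸ (hrot b).symm)))
  · obtain ⟨⟨e, b⟩, hd⟩ := P.rot_bijective.2 (f, false)
    obtain rfl : b = true := by simpa [hd] using halt (e, b)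
    have hv := P.rot_vertex (e, true)
    rw [hd] at hv
    simp [MultiDigraph.dartVert] at hv
    exact ⟨e, hv.symm.trans hf, by simp [hd]⟩

theorem exists_ne (P : PlanarDigraph V E) (hloop : ∀ e, P.G.src e ≠ P.G.tgt e) (w : V) :
    ∃ v, v ≠ w := by
  by_contra! hw
  have : Unique V := ⟨⟨w⟩, hw⟩
  have : IsEmpty E := ⟨fun e => hloop e (Subsingleton.elim _ _)⟩
  have : IsEmpty (Quot fun d d' : E × Bool => d' = P.rot (d.1, !d.2)) :=
    ⟨fun q => (Quot.exists_rep q).elim fun d _ => isEmptyElim d⟩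
  have := P.euler
  simp only [Nat.card_unique, Nat.card_of_isEmpty] at this
  omega

end PlanarDigraph

/-- **The in-degree of any vertex bounds some spanning-tree count from
below.**  Let `G` be a prime planar digraph in which incoming and outgoing
edges alternate at every vertex, and let `w` be a vertex of in-degree `n`.
Then there is a vertex `v ≠ w` such that `G` has at least `n` directed
spanning subtrees with origin `v`. -/
theorem indegree_le_treeCount_of_prime {V E : Type} [Fintype V] [Fintype E]
    (P : PlanarDigraph V E) (halt : P.Alternating) (hprime : P.G.Prime)
    (w : V) :
    ∃ v : V, v ≠ w ∧ {e : E | P.G.tgt e = w}.ncard ≤ P.G.treeCount v := by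
  obtain ⟨hloop, -, hconn⟩ := hprime
  by_cases hw : ∃ e, P.G.tgt e = w
  · obtain ⟨e, rfl⟩ := hw
    exact ⟨P.G.src e, hloop e, MultiDigraph.IsThreeEdgeConnected.ncard_tgt_eq_le_treeCount_src
      hconn halt.isBalanced hloop e⟩
  · obtain ⟨v, hv⟩ := P.exists_ne hloop w
    push Not at hw
    exact ⟨v, hv, by simp [hw]⟩
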